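/- arXiv:2406.03938 — 6 statements merged into one kernel-verified Lean document; each statement's English description precedes it below -/
import Mathlib

section
/- Let n,m ≥ 1, u : {0,1}ⁿ × {0,1}ᵐ → ℝ, let (x,y) ∈ {0,1}ⁿ × {0,1}ᵐ be a corner, and let α > 0. There exist γ̂ ∈ (0,1/2) and constants C₁ > C₀ > 0 such that for every γ ≤ γ̂ and every state (p,q) ∈ (0,1)^{n+m} that is γ-near (x,y), the Red Queen vector field satisfies: (1) for every i with u(x,y) − u(x̄ⁱ,y) ≥ α, ṗ_{i,xᵢ} > C₁·p_{i,x̄ᵢ}, and for every j with u(x,y) − u(x,ȳʲ) ≤ −α, q̇_{j,yⱼ} > C₁·q_{j,ȳⱼ}; (2) for every i with u(x,y) − u(x̄ⁱ,y) ≤ −α, ṗ_{i,xᵢ} < −C₁·p_{i,x̄ᵢ}, and for every j with u(x,y) − u(x,ȳʲ) ≥ α, q̇_{j,yⱼ} < −C₁·q_{j,ȳⱼ}; (3) for every i with u(x,y) − u(x̄ⁱ,y) = 0, |ṗ_{i,xᵢ}| < C₀·p_{i,x̄ᵢ}, and for every j with u(x,y) − u(x,ȳʲ) = 0, |q̇_{j,yⱼ}|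 < C₀·q_{j,ȳⱼ}. -/
open MeasureTheory

noncomputable section

/-- `p_{i,b}`: the probability that gene `i` takes allele `b`
(`b = false ↦ pᵢ`, `b = true ↦ 1 − pᵢ`). -/
def coord {n : ℕ} (p : Fin n → ℝ) (i : Fin n) (b : Bool) : ℝ :=
  if b then 1 - p i else p i

/-- `x` with its `i`-th bit flipped. -/
def bflip {n : ℕ} (x : Fin n → Bool) (i : Fin n) : Fin n → Bool :=
  Function.update x i (!x i)

/-- `K_{A,i}(x,y,p,q) = Π_{i'≠i} p_{i',x_{i'}} Π_j q_{j,y_j}`. -/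
def KA {n m : ℕ} (p : Fin n → ℝ) (q : Fin m → ℝ) (i : Fin n)
    (x : Fin n → Bool) (y : Fin m → Bool) : ℝ :=
  (∏ i' ∈ Finset.univ.erase i, coord p i' (x i')) * ∏ j, coord q j (y j)

/-- `K_{B,j}(x,y,p,q) = Π_i p_{i,x_i} Π_{j'≠j} q_{j',y_{j'}}`. -/
def KB {n m : ℕ} (p : Fin n → ℝ) (q : Fin m → ℝ) (j : Fin m)
    (x : Fin n → Bool) (y : Fin m → Bool) : ℝ :=
  (∏ i, coord p i (x i)) * ∏ j' ∈ Finset.univ.erase j, coord q j' (y j')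

/-- The average payoff `û(p,q) = Σ_{x,y} P(x,y) u(x,y)` where
`P(x,y) = Π_i p_{i,x_i} Π_j q_{j,y_j}`. -/
def uhat {n m : ℕ} (u : (Fin n → Bool) → (Fin m → Bool) → ℝ)
    (p : Fin n → ℝ) (q : Fin m → ℝ) : ℝ :=
  ∑ x : Fin n → Bool, ∑ y : Fin m → Bool,
    ((∏ i, coord p i (x i)) * ∏ j, coord q j (y j)) * u x y

/-- The average payoff conditioned on `xᵢ = b`:
`û_{i,b}(p,q) = Σ_{x : x_i = b} Σ_y K_{A,i}(x,y,p,q) u(x,y)`. -/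
def uhatA {n m : ℕ} (u : (Fin n → Bool) → (Fin m → Bool) → ℝ)
    (p : Fin n → ℝ) (q : Fin m → ℝ) (i : Fin n) (b : Bool) : ℝ :=
  ∑ x : Fin n → Bool, ∑ y : Fin m → Bool,
    if x i = b then KA p q i x y * u x y else 0

/-- The average payoff conditioned on `yⱼ = b`:
`û_{j,b}(p,q) = Σ_x Σ_{y : y_j = b} K_{B,j}(x,y,p,q) u(x,y)`. -/
def uhatB {n m : ℕ} (u : (Fin n → Bool) → (Fin m → Bool) → ℝ)
    (p : Fin n → ℝ) (q : Fin m → ℝ) (j : Fin m) (b : Bool) : ℝ :=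
  ∑ x : Fin n → Bool, ∑ y : Fin m → Bool,
    if y j = b then KB p q j x y * u x y else 0

/-- `(p,q)` is a solution of the Red Queen dynamics
`ṗᵢ = pᵢ(û_{i,0}(p,q) − û(p,q))`, `q̇ⱼ = −qⱼ(û_{j,0}(p,q) − û(p,q))`
for all times `t ≥ 0`. -/
def RQSolution {n m : ℕ} (u : (Fin n → Bool) → (Fin m → Bool) → ℝ)
    (p : ℝ → Fin n → ℝ) (q : ℝ → Fin m → ℝ) : Prop :=
  (∀ t, 0 ≤ t → ∀ i, HasDerivAt (fun s => p s i)
      (p t i * (uhatA u (p t) (q t) i false - uhat u (p t) (q t))) t) ∧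
  (∀ t, 0 ≤ t → ∀ j, HasDerivAt (fun s => q s j)
      (-(q t j * (uhatB u (p t) (q t) j false - uhat u (p t) (q t)))) t)

/-- `(p,q)` takes values in the open cube `(0,1)^{n+m}` at all times `t ≥ 0`. -/
def InteriorValues {n m : ℕ} (p : ℝ → Fin n → ℝ) (q : ℝ → Fin m → ℝ) : Prop :=
  ∀ t, 0 ≤ t → (∀ i, p t i ∈ Set.Ioo (0:ℝ) 1) ∧ (∀ j, q t j ∈ Set.Ioo (0:ℝ) 1)

/-- Binary Shannon entropy. -/
def binEnt (s : ℝ) : ℝ := -(s * Real.log s) - (1 - s) * Real.log (1 - s)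

/-- The entropy `H(p) = Σᵢ h(pᵢ)` of a population. -/
def ent {n : ℕ} (p : Fin n → ℝ) : ℝ := ∑ i, binEnt (p i)

/-- The state `(p,q)` is `γ`-near the corner `(x,y)`:
`p_{i,xᵢ} > 1 − γ` for all `i` and `q_{j,yⱼ} > 1 − γ` for all `j`. -/
def Near {n m : ℕ} (γ : ℝ) (x : Fin n → Bool) (y : Fin m → Bool)
    (p : Fin n → ℝ) (q : Fin m → ℝ) : Prop :=
  (∀ i, 1 - γ < coord p i (x i)) ∧ (∀ j, 1 - γ < coord q j (y j))

/-- The Red Queen vector field component for `p_{i,b}`: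
`ṗ_{i,b} = p_{i,b}(1−p_{i,b})·Σ_{x' : x'ᵢ=b} Σ_{y'} K_{A,i}(x',y',p,q)(u(x',y') − u(x̄'ⁱ,y'))`. -/
def fieldA {n m : ℕ} (u : (Fin n → Bool) → (Fin m → Bool) → ℝ)
    (p : Fin n → ℝ) (q : Fin m → ℝ) (i : Fin n) (b : Bool) : ℝ :=
  coord p i b * (1 - coord p i b) *
    ∑ x' : Fin n → Bool, ∑ y' : Fin m → Bool,
      if x' i = b then KA p q i x' y' * (u x' y' - u (bflip x' i) y') else 0

/-- The Red Queen vector field component for `q_{j,b}`: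
`q̇_{j,b} = −q_{j,b}(1−q_{j,b})·Σ_{x'} Σ_{y' : y'ⱼ=b} K_{B,j}(x',y',p,q)(u(x',y') − u(x',ȳ'ʲ))`. -/
def fieldB {n m : ℕ} (u : (Fin n → Bool) → (Fin m → Bool) → ℝ)
    (p : Fin n → ℝ) (q : Fin m → ℝ) (j : Fin m) (b : Bool) : ℝ :=
  -(coord q j b * (1 - coord q j b) *
    ∑ x' : Fin n → Bool, ∑ y' : Fin m → Bool,
      if y' j = b then KB p q j x' y' * (u x' y' - u x' (bflip y' j)) else 0)

/-! Near the corner `(x,y)` the weights `K_{A,i}(x',y')` with `x'ᵢ = xᵢ` form a probability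
distribution giving mass at least `(1 − γ)^{n+m} ≥ 1 − (n+m)γ` to `(x,y)`. Hence the sum in
`ṗ_{i,xᵢ} = p_{i,xᵢ} p_{i,x̄ᵢ} · Σ …` is within `4 max|u| (n+m)γ` of `u(x,y) − u(x̄ⁱ,y)`, and since
`p_{i,xᵢ} > 1/2` the three estimates hold with `C₁ = α/4` and `C₀ = α/8`. The field of `q` is minus
the field of `p` in the game with the players exchanged, so its estimates are the same ones. -/

open Finset

lemma abs_sum_mul_sub_le {ι : Type*} [Fintype ι] {w d : ι → ℝ} {z₀ : ι} {ε B : ℝ}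
    (hw : ∀ z, 0 ≤ w z) (hw1 : ∑ z, w z = 1) (hz₀ : 1 - ε ≤ w z₀) (hd : ∀ z, |d z| ≤ B) :
    |∑ z, w z * d z - d z₀| ≤ 2 * B * ε := by
  classical
  have hcentre : ∑ z, w z * d z - d z₀ = ∑ z ∈ univ.erase z₀, w z * (d z - d z₀) := by
    rw [sum_erase _ (by simp)]
    simp [mul_sub, sum_sub_distrib, ← sum_mul, hw1]
  have hrest : ∑ z ∈ univ.erase z₀, w z = 1 - w z₀ := by
    rw [← hw1, ← sum_erase_add _ _ (mem_univ z₀), add_sub_cancel_right]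
  rw [hcentre]
  calc |∑ z ∈ univ.erase z₀, w z * (d z - d z₀)|
      ≤ ∑ z ∈ univ.erase z₀, w z * (2 * B) := by
        refine (abs_sum_le_sum_abs _ _).trans (sum_le_sum fun z _ => ?_)
        rw [abs_mul, abs_of_nonneg (hw z)]
        exact mul_le_mul_of_nonneg_left (by linarith [abs_sub (d z) (d z₀), hd z, hd z₀]) (hw z)
    _ = 2 * B * (1 - w z₀) := by rw [← sum_mul, hrest, mul_comm]
    _ ≤ 2 * B * ε := by
        have : 0 ≤ B := (abs_nonneg _).trans (hd z₀)
        gcongr; linarith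

lemma pow_le_prod_of_le {ι : Type*} {s : Finset ι} {f : ι → ℝ} {c : ℝ} {k : ℕ}
    (hc₀ : 0 ≤ c) (hc₁ : c ≤ 1) (hk : #s ≤ k) (hf : ∀ i ∈ s, c ≤ f i) :
    c ^ k ≤ ∏ i ∈ s, f i :=
  calc c ^ k ≤ c ^ #s := pow_le_pow_of_le_one hc₀ hc₁ hk
    _ = ∏ _i ∈ s, c := (prod_const c).symm
    _ ≤ ∏ i ∈ s, f i := prod_le_prod (fun _ _ => hc₀) hf

lemma mul_one_sub_mul_bounds {a S D α : ℝ} (hα : 0 < α) (ha : 1 / 2 < a) (ha₁ : a < 1)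
    (hS : |S - D| ≤ α / 16) :
    (α ≤ D → α / 4 * (1 - a) < a * (1 - a) * S) ∧
    (D ≤ -α → a * (1 - a) * S < -(α / 4 * (1 - a))) ∧
    (D = 0 → |a * (1 - a) * S| < α / 8 * (1 - a)) := by
  obtain ⟨hSlo, hShi⟩ := abs_le.mp hS
  have h1a : 0 < 1 - a := by linarith
  refine ⟨fun hD => ?_, fun hD => ?_, fun hD => ?_⟩
  · have : α / 4 < a * S := by nlinarith
    nlinarith
  · have : a * S < -(α / 4) := by nlinarith
    nlinarith
  · subst hD
    have : a * |S| < α / 8 := by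
      have : |S| ≤ α / 16 := by simpa using hS
      nlinarith [abs_nonneg S]
    rw [abs_mul, abs_of_pos (mul_pos (by linarith) h1a)]
    nlinarith

section RedQueen

variable {n m : ℕ}

lemma coord_not (p : Fin n → ℝ) (i : Fin n) (b : Bool) :
    coord p i (!b) = 1 - coord p i b := by
  cases b <;> simp [coord]

lemma coord_mem_Icc {p : Fin n → ℝ} {i : Fin n} (h : p i ∈ Set.Icc (0:ℝ) 1) (b : Bool) :
    coord p i b ∈ Set.Icc (0:ℝ) 1 := by
  cases b <;> simp only [coord, Bool.false_eq_true, ↓reduceIte, Set.mem_Icc] <;>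
    constructor <;> linarith [h.1, h.2]

lemma coord_lt_one {p : Fin n → ℝ} {i : Fin n} (h : p i ∈ Set.Ioo (0:ℝ) 1) (b : Bool) :
    coord p i b < 1 := by
  cases b <;> simp only [coord, Bool.false_eq_true, ↓reduceIte] <;> linarith [h.1, h.2]

lemma sum_prod_coord (p : Fin n → ℝ) : ∑ x : Fin n → Bool, ∏ i, coord p i (x i) = 1 := by
  rw [← Fintype.prod_sum]
  exact prod_eq_one fun i _ => by simp [coord]

lemma sum_ite_prod_erase_coord (p : Fin n → ℝ) (i : Fin n) (b : Bool) :
    ∑ x : Fin n → Bool,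
      (if x i = b then ∏ i' ∈ univ.erase i, coord p i' (x i') else 0) = 1 := by
  -- fixing gene `i` to the allele `b` turns the constraint `x i = b` into a product weight
  rw [← sum_prod_coord (Function.update p i (if b then 0 else 1))]
  refine sum_congr rfl fun x _ => ?_
  rw [← mul_prod_erase _ _ (mem_univ i)]
  have herase : ∏ i' ∈ univ.erase i, coord (Function.update p i (if b then 0 else 1)) i' (x i')
      = ∏ i' ∈ univ.erase i, coord p i' (x i') :=
    prod_congr rfl fun i' hi' => by simp [coord, Function.update_of_ne (ne_of_mem_erase hi')]
  rw [herase]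
  cases b <;> cases x i <;> simp [coord]

lemma sum_ite_KA (p : Fin n → ℝ) (q : Fin m → ℝ) (i : Fin n) (b : Bool) :
    ∑ x : Fin n → Bool, ∑ y : Fin m → Bool, (if x i = b then KA p q i x y else 0) = 1 := by
  simp only [KA, ← ite_zero_mul, ← mul_sum, sum_prod_coord, mul_one]
  exact sum_ite_prod_erase_coord p i b

lemma one_sub_mul_le_KA {γ : ℝ} {p : Fin n → ℝ} {q : Fin m → ℝ}
    {x : Fin n → Bool} {y : Fin m → Bool} (hγ₀ : 0 ≤ γ) (hγ₁ : γ ≤ 1)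
    (hnear : Near γ x y p q) (i : Fin n) :
    1 - (n + m : ℝ) * γ ≤ KA p q i x y := by
  have hbernoulli : 1 - (n + m : ℝ) * γ ≤ (1 - γ) ^ (n + m) := by
    simpa [sub_eq_add_neg] using one_add_mul_le_pow (a := -γ) (by linarith) (n + m)
  refine hbernoulli.trans ?_
  have hA : (1 - γ) ^ n ≤ ∏ i' ∈ univ.erase i, coord p i' (x i') :=
    pow_le_prod_of_le (by linarith) (by linarith) (by simp) fun i' _ => (hnear.1 i').le
  have hB : (1 - γ) ^ m ≤ ∏ j, coord q j (y j) :=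
    pow_le_prod_of_le (by linarith) (by linarith) (by simp) fun j _ => (hnear.2 j).le
  rw [pow_add, KA]
  exact mul_le_mul hA hB (by positivity) ((pow_nonneg (by linarith) _).trans hA)

variable (u : (Fin n → Bool) → (Fin m → Bool) → ℝ)

def gain (p : Fin n → ℝ) (q : Fin m → ℝ) (i : Fin n) (b : Bool) : ℝ :=
  ∑ x' : Fin n → Bool, ∑ y' : Fin m → Bool,
    if x' i = b then KA p q i x' y' * (u x' y' - u (bflip x' i) y') else 0

lemma fieldA_eq_gain (p : Fin n → ℝ) (q : Fin m → ℝ) (i : Fin n) (b : Bool) :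
    fieldA u p q i b = coord p i b * (1 - coord p i b) * gain u p q i b := rfl

lemma fieldB_eq_neg_fieldA_swap (p : Fin n → ℝ) (q : Fin m → ℝ) (j : Fin m) (b : Bool) :
    fieldB u p q j b = -fieldA (fun y x => u x y) q p j b := by
  rw [fieldB, fieldA, sum_comm]
  congr 2
  refine sum_congr rfl fun y' _ => sum_congr rfl fun x' _ => ?_
  rw [KA, KB, mul_comm (∏ i, coord p i (x' i))]

lemma abs_gain_sub_le {M γ : ℝ} (hM : ∀ a b, |u a b| ≤ M) {p : Fin n → ℝ} {q : Fin m → ℝ}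
    (hp : ∀ i, p i ∈ Set.Icc (0:ℝ) 1) (hq : ∀ j, q j ∈ Set.Icc (0:ℝ) 1)
    {x : Fin n → Bool} {y : Fin m → Bool} (hγ : γ ≤ 1) (hnear : Near γ x y p q) (i : Fin n) :
    |gain u p q i (x i) - (u x y - u (bflip x i) y)| ≤ 4 * M * ((n + m) * γ) := by
  have hγ₀ : 0 ≤ γ := by linarith [hnear.1 i, (coord_mem_Icc (hp i) (x i)).2]
  have hgain : gain u p q i (x i) = ∑ z : (Fin n → Bool) × (Fin m → Bool),
      (if z.1 i = x i then KA p q i z.1 z.2 else 0) * (u z.1 z.2 - u (bflip z.1 i) z.2) := by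
    rw [gain, ← Fintype.sum_prod_type']
    simp only [ite_zero_mul]
  rw [hgain, show (4 * M) = 2 * (2 * M) by ring]
  refine abs_sum_mul_sub_le (z₀ := (x, y)) (fun z => ?_) ?_ ?_ fun z => ?_
  · split_ifs
    · exact mul_nonneg (prod_nonneg fun i' _ => (coord_mem_Icc (hp i') _).1)
        (prod_nonneg fun j _ => (coord_mem_Icc (hq j) _).1)
    · exact le_rfl
  · rw [Fintype.sum_prod_type]
    exact sum_ite_KA p q i (x i)
  · simpa using one_sub_mul_le_KA hγ₀ hγ hnear i
  · linarith [abs_sub (u z.1 z.2) (u (bflip z.1 i) z.2), hM z.1 z.2, hM (bflip z.1 i) z.2]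

lemma fieldA_bounds_of_near {M α γ : ℝ} (hα : 0 < α) (hM : ∀ a b, |u a b| ≤ M)
    {p : Fin n → ℝ} {q : Fin m → ℝ}
    (hp : ∀ i, p i ∈ Set.Ioo (0:ℝ) 1) (hq : ∀ j, q j ∈ Set.Ioo (0:ℝ) 1)
    {x : Fin n → Bool} {y : Fin m → Bool} (hγ : γ < 1 / 2) (hγα : 64 * M * (n + m) * γ ≤ α)
    (hnear : Near γ x y p q) (i : Fin n) :
    (α ≤ u x y - u (bflip x i) y →
      α / 4 * coord p i (!(x i)) < fieldA u p q i (x i)) ∧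
    (u x y - u (bflip x i) y ≤ -α →
      fieldA u p q i (x i) < -(α / 4 * coord p i (!(x i)))) ∧
    (u x y - u (bflip x i) y = 0 →
      |fieldA u p q i (x i)| < α / 8 * coord p i (!(x i))) := by
  have hgain := abs_gain_sub_le u hM (fun i => Set.Ioo_subset_Icc_self (hp i))
    (fun j => Set.Ioo_subset_Icc_self (hq j)) (by linarith) hnear i
  rw [fieldA_eq_gain, coord_not]
  exact mul_one_sub_mul_bounds hα (by linarith [hnear.1 i]) (coord_lt_one (hp i) _)
    (by linarith)

lemma fieldB_bounds_of_near {M α γ : ℝ} (hα : 0 < α) (hM : ∀ a b, |u a b| ≤ M)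
    {p : Fin n → ℝ} {q : Fin m → ℝ}
    (hp : ∀ i, p i ∈ Set.Ioo (0:ℝ) 1) (hq : ∀ j, q j ∈ Set.Ioo (0:ℝ) 1)
    {x : Fin n → Bool} {y : Fin m → Bool} (hγ : γ < 1 / 2) (hγα : 64 * M * (n + m) * γ ≤ α)
    (hnear : Near γ x y p q) (j : Fin m) :
    (u x y - u x (bflip y j) ≤ -α →
      α / 4 * coord q j (!(y j)) < fieldB u p q j (y j)) ∧
    (α ≤ u x y - u x (bflip y j) →
      fieldB u p q j (y j) < -(α / 4 * coord q j (!(y j)))) ∧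
    (u x y - u x (bflip y j) = 0 →
      |fieldB u p q j (y j)| < α / 8 * coord q j (!(y j))) := by
  obtain ⟨hpos, hneg, hzero⟩ := fieldA_bounds_of_near (fun b a => u a b) hα (fun b a => hM a b)
    hq hp hγ (by rwa [add_comm (m : ℝ)]) ⟨hnear.2, hnear.1⟩ j
  rw [fieldB_eq_neg_fieldA_swap, abs_neg]
  exact ⟨fun hD => by linarith [hneg hD], fun hD => by linarith [hpos hD], hzero⟩

end RedQueen

theorem stmt11_general {n m : ℕ}
    (u : (Fin n → Bool) → (Fin m → Bool) → ℝ)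
    (x : Fin n → Bool) (y : Fin m → Bool) (α : ℝ) (hα : 0 < α) :
    ∃ γhat ∈ Set.Ioo (0:ℝ) (1/2), ∃ C₁ C₀ : ℝ, 0 < C₀ ∧ C₀ < C₁ ∧
      ∀ γ ≤ γhat, ∀ (p : Fin n → ℝ) (q : Fin m → ℝ),
        (∀ i, p i ∈ Set.Ioo (0:ℝ) 1) → (∀ j, q j ∈ Set.Ioo (0:ℝ) 1) →
        Near γ x y p q →
        (∀ i, α ≤ u x y - u (bflip x i) y →
          C₁ * coord p i (!(x i)) < fieldA u p q i (x i)) ∧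
        (∀ j, u x y - u x (bflip y j) ≤ -α →
          C₁ * coord q j (!(y j)) < fieldB u p q j (y j)) ∧
        (∀ i, u x y - u (bflip x i) y ≤ -α →
          fieldA u p q i (x i) < -(C₁ * coord p i (!(x i)))) ∧
        (∀ j, α ≤ u x y - u x (bflip y j) →
          fieldB u p q j (y j) < -(C₁ * coord q j (!(y j)))) ∧
        (∀ i, u x y - u (bflip x i) y = 0 →
          |fieldA u p q i (x i)| < C₀ * coord p i (!(x i))) ∧
        (∀ j, u x y - u x (bflip y j) = 0 →
          |fieldB u p q j (y j)| < C₀ * coord q j (!(y j))) := by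
  obtain ⟨M, hM⟩ := Finite.bddAbove_range fun z : (Fin n → Bool) × (Fin m → Bool) => |u z.1 z.2|
  have hMu : ∀ a b, |u a b| ≤ M := fun a b => hM ⟨(a, b), rfl⟩
  set c : ℝ := 64 * M * (n + m)
  have hc : 0 ≤ c := by have := (abs_nonneg _).trans (hMu x y); positivity
  have hγhat : c * (α / (c + 4 * α)) ≤ α := by
    rw [mul_div_assoc', div_le_iff₀ (by positivity)]; nlinarith
  refine ⟨α / (c + 4 * α), ⟨by positivity, by rw [div_lt_iff₀ (by positivity)]; linarith⟩,
    α / 4, α / 8, by positivity, by linarith, fun γ hγ p q hp hq hnear => ?_⟩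
  have hγ₂ : γ < 1 / 2 := hγ.trans_lt (by rw [div_lt_iff₀ (by positivity)]; linarith)
  have hγα : c * γ ≤ α := (mul_le_mul_of_nonneg_left hγ hc).trans hγhat
  have hA := fieldA_bounds_of_near u hα hMu hp hq hγ₂ hγα hnear
  have hB := fieldB_bounds_of_near u hα hMu hp hq hγ₂ hγα hnear
  exact ⟨fun i => (hA i).1, fun j => (hB j).1, fun i => (hA i).2.1, fun j => (hB j).2.1,
    fun i => (hA i).2.2, fun j => (hB j).2.2⟩

/-- (Claim 4.1 of the paper.) For any corner `(x,y)` and any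
`α > 0` there are `γ̂ ∈ (0,1/2)` and constants `C₁ > C₀ > 0` such that for
every `γ ≤ γ̂` and every state `(p,q) ∈ (0,1)^{n+m}` that is `γ`-near `(x,y)`,
the Red Queen vector field satisfies the three sign/speed estimates. -/
theorem stmt11 {n m : ℕ} (hn : 1 ≤ n) (hm : 1 ≤ m)
    (u : (Fin n → Bool) → (Fin m → Bool) → ℝ)
    (x : Fin n → Bool) (y : Fin m → Bool) (α : ℝ) (hα : 0 < α) :
    ∃ γhat ∈ Set.Ioo (0:ℝ) (1/2), ∃ C₁ C₀ : ℝ, 0 < C₀ ∧ C₀ < C₁ ∧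
      ∀ γ ≤ γhat, ∀ (p : Fin n → ℝ) (q : Fin m → ℝ),
        (∀ i, p i ∈ Set.Ioo (0:ℝ) 1) → (∀ j, q j ∈ Set.Ioo (0:ℝ) 1) →
        Near γ x y p q →
        (∀ i, α ≤ u x y - u (bflip x i) y →
          C₁ * coord p i (!(x i)) < fieldA u p q i (x i)) ∧
        (∀ j, u x y - u x (bflip y j) ≤ -α →
          C₁ * coord q j (!(y j)) < fieldB u p q j (y j)) ∧
        (∀ i, u x y - u (bflip x i) y ≤ -α →
          fieldA u p q i (x i) < -(C₁ * coord p i (!(x i)))) ∧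
        (∀ j, α ≤ u x y - u x (bflip y j) →
          fieldB u p q j (y j) < -(C₁ * coord q j (!(y j)))) ∧
        (∀ i, u x y - u (bflip x i) y = 0 →
          |fieldA u p q i (x i)| < C₀ * coord p i (!(x i))) ∧
        (∀ j, u x y - u x (bflip y j) = 0 →
          |fieldB u p q j (y j)| < C₀ * coord q j (!(y j))) :=
  stmt11_general u x y α hα
end
end

section
/- Consider the ODE system δ̇ᵢ = ¼(1−δᵢ²)(δ_{3−i}+ε₁+ε₂), ε̇ᵢ = −¼(1−εᵢ²)(δ₁+δ₂−ε_{3−i}), i=1,2. If the initial condition lies in (−1,1)^4 and satisfies δ₁(0) = −δ₂(0) and ε₁(0) = −ε₂(0), then the solution satisfies δ₁(t) = −δ₂(t) and ε₁(t) = −ε₂(t) for all t ≥ 0, and all four coordinates δ₁(t), δ₂(t), ε₁(t), ε₂(t) converge to 0 as t → ∞. -/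
open Filter

noncomputable section

private lemma cont_comp_max {a : ℝ → ℝ} (ha : ∀ t, 0 ≤ t → ContinuousAt a t) :
    Continuous fun s => a (max s 0) := by
  rw [continuous_iff_continuousAt]
  intro s
  have h1 : ContinuousAt (fun s : ℝ => max s 0) s := (continuous_id.max continuous_const).continuousAt
  exact ContinuousAt.comp (ha (max s 0) (le_max_right _ _)) h1

/-- Integrating factor solution for a scalar linear ODE on `[0, ∞)`. -/
private lemma lin_ode (g a : ℝ → ℝ) (hg : ∀ t, 0 ≤ t → HasDerivAt g (a t * g t) t)
    (ha : ∀ t, 0 ≤ t → ContinuousAt a t) :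
    ∀ t, 0 ≤ t → g t = g 0 * Real.exp (∫ s in (0:ℝ)..t, a (max s 0)) := by
  have habc : Continuous fun s => a (max s 0) := cont_comp_max ha
  have hA' : ∀ t : ℝ, HasDerivAt (fun u => ∫ s in (0:ℝ)..u, a (max s 0)) (a (max t 0)) t := by
    intro t
    exact intervalIntegral.integral_hasDerivAt_right (habc.intervalIntegrable _ _)
      (habc.stronglyMeasurableAtFilter _ _) habc.continuousAt
  set A : ℝ → ℝ := fun u => ∫ s in (0:ℝ)..u, a (max s 0) with hAdef
  have hF' : ∀ t, 0 ≤ t → HasDerivAt (fun u => g u * Real.exp (-A u)) 0 t := by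
    intro t ht
    have h1 : HasDerivAt (fun u => Real.exp (-A u)) (Real.exp (-A t) * (-(a (max t 0)))) t :=
      ((hA' t).neg).exp
    have h2 := (hg t ht).mul h1
    refine HasDerivAt.congr_deriv h2 ?_
    have h3 : max t 0 = t := max_eq_left ht
    rw [h3]; ring
  intro t ht
  have hcont : ContinuousOn (fun u => g u * Real.exp (-A u)) (Set.Icc 0 t) := by
    intro s hs
    exact ((hg s hs.1).continuousAt.mul
      ((Real.continuous_exp.continuousAt).comp ((hA' s).continuousAt.neg))).continuousWithinAt
  have key := constant_of_has_deriv_right_zero hcont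
    (fun s hs => (hF' s hs.1).hasDerivWithinAt) t ⟨ht, le_refl t⟩
  have hA0 : A 0 = 0 := intervalIntegral.integral_same
  rw [hA0, neg_zero, Real.exp_zero, mul_one] at key
  show g t = g 0 * Real.exp (A t)
  calc g t = g t * Real.exp (-A t) * Real.exp (A t) := by
        rw [mul_assoc, ← Real.exp_add]; simp
    _ = g 0 * Real.exp (A t) := by rw [key]

/-- Convergence to 0 for the scalar reduced dynamics `x' = -(1/4)(1-x²)x`. -/
private lemma scalar_tendsto (x : ℝ → ℝ)
    (hx : ∀ t, 0 ≤ t → HasDerivAt x (-(1/4) * (1 - x t ^ 2) * x t) t)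
    (h0 : x 0 ∈ Set.Ioo (-1:ℝ) 1) :
    Tendsto x atTop (nhds 0) := by
  have hc : ∀ t, 0 ≤ t → ContinuousAt x t := fun t ht => (hx t ht).continuousAt
  -- ψ = 1 - x² satisfies ψ' = a₁ ψ with a₁ = x²/2
  have hpsi : ∀ t, 0 ≤ t →
      HasDerivAt (fun u => 1 - x u ^ 2) (((1/2) * x t ^ 2) * (1 - x t ^ 2)) t := by
    intro t ht
    have h2 := ((hx t ht).pow 2).const_sub 1
    refine HasDerivAt.congr_deriv h2 ?_
    push_cast
    ring
  have ha1c : ∀ t, 0 ≤ t → ContinuousAt (fun u => (1/2) * x u ^ 2) t := fun t ht =>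
    continuousAt_const.mul ((hc t ht).pow 2)
  have hpsiEq := lin_ode (fun u => 1 - x u ^ 2) (fun u => (1/2) * x u ^ 2) hpsi ha1c
  have hpsi0 : (0:ℝ) < 1 - x 0 ^ 2 := by nlinarith [h0.1, h0.2]
  have hpsiLB : ∀ t, 0 ≤ t → 1 - x 0 ^ 2 ≤ 1 - x t ^ 2 := by
    intro t ht
    have h := hpsiEq t ht
    beta_reduce at h
    have hI : 0 ≤ ∫ s in (0:ℝ)..t, (1/2) * x (max s 0) ^ 2 :=
      intervalIntegral.integral_nonneg ht (fun s _ => by positivity)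
    have hexp := Real.one_le_exp hI
    nlinarith [h, hexp, hpsi0]
  -- u = x² satisfies u' = b₁ u with b₁ = -(1/2)(1-x²)
  have hu : ∀ t, 0 ≤ t →
      HasDerivAt (fun u => x u ^ 2) ((-(1/2) * (1 - x t ^ 2)) * x t ^ 2) t := by
    intro t ht
    have h2 := (hx t ht).pow 2
    refine HasDerivAt.congr_deriv h2 ?_
    push_cast
    ring
  have hb1c : ∀ t, 0 ≤ t → ContinuousAt (fun u => -(1/2) * (1 - x u ^ 2)) t := fun t ht =>
    continuousAt_const.mul (continuousAt_const.sub ((hc t ht).pow 2))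
  have huEq := lin_ode (fun u => x u ^ 2) (fun u => -(1/2) * (1 - x u ^ 2)) hu hb1c
  set c : ℝ := (1/2) * (1 - x 0 ^ 2) with hcdef
  have hcpos : 0 < c := by positivity
  have hub : ∀ t, 0 ≤ t → x t ^ 2 ≤ x 0 ^ 2 * Real.exp (-c * t) := by
    intro t ht
    have h := huEq t ht
    beta_reduce at h
    have hbcont : Continuous fun s => -(1/2) * (1 - x (max s 0) ^ 2) := by
      have := cont_comp_max hb1c
      simpa using this
    have hint : (∫ s in (0:ℝ)..t, -(1/2) * (1 - x (max s 0) ^ 2)) ≤ ∫ _s in (0:ℝ)..t, -c := by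
      apply intervalIntegral.integral_mono_on ht (hbcont.intervalIntegrable _ _)
        intervalIntegrable_const
      intro s _
      have := hpsiLB (max s 0) (le_max_right _ _)
      rw [hcdef]
      nlinarith [this]
    rw [intervalIntegral.integral_const, smul_eq_mul] at hint
    have hint2 : (∫ s in (0:ℝ)..t, -(1/2) * (1 - x (max s 0) ^ 2)) ≤ -c * t := by
      nlinarith [hint]
    have hexp := Real.exp_le_exp.mpr hint2
    rw [h]
    exact mul_le_mul_of_nonneg_left hexp (sq_nonneg _)
  have hg0 : Tendsto (fun t => x 0 ^ 2 * Real.exp (-c * t)) atTop (nhds 0) := by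
    have h1 : Tendsto (fun t : ℝ => -c * t) atTop atBot := by
      have h2 : Tendsto (fun t : ℝ => c * t) atTop atTop :=
        Tendsto.const_mul_atTop hcpos tendsto_id
      have h3 := tendsto_neg_atTop_atBot.comp h2
      exact h3.congr fun t => by show -(c * t) = -c * t; ring
    have h3 := Real.tendsto_exp_atBot.comp h1
    have h4 : Tendsto (fun t : ℝ => x 0 ^ 2 * Real.exp (-c * t)) atTop (nhds (x 0 ^ 2 * 0)) :=
      tendsto_const_nhds.mul h3
    simpa using h4
  have hsq : Tendsto (fun t => x t ^ 2) atTop (nhds 0) := by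
    apply squeeze_zero' (Eventually.of_forall fun t => sq_nonneg (x t))
      ((eventually_ge_atTop (0:ℝ)).mono hub) hg0
  have habs : Tendsto (fun t => |x t|) atTop (nhds 0) := by
    have h2 := hsq.sqrt
    rw [Real.sqrt_zero] at h2
    exact h2.congr fun t => Real.sqrt_sq_eq_abs (x t)
  exact squeeze_zero_norm (fun t => (Real.norm_eq_abs (x t)).le) habs

private lemma du_bound (a1 b1 a2 b2 M N : ℝ) (h1 : |a1| ≤ M) (h2 : |b1| ≤ M)
    (hM0 : 0 ≤ M) (hN1 : |a1 + b1| ≤ N) (hN2 : |a2 + b2| ≤ N) (hN0 : 0 ≤ N) :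
    |(1/4) * (1 - a1 ^ 2) * (b1 + a2 + b2) + (1/4) * (1 - b1 ^ 2) * (a1 + a2 + b2)|
      ≤ (1 + M ^ 2) * N := by
  have hd1d2 : |a1 * b1| ≤ M * M := by
    rw [abs_mul]; exact mul_le_mul h1 h2 (abs_nonneg _) hM0
  have hcoef1 : |1 - a1 * b1| ≤ 1 + M ^ 2 := by
    rw [abs_le]; constructor <;> nlinarith [abs_le.mp hd1d2]
  have hsq1 : a1 ^ 2 ≤ M ^ 2 := by nlinarith [abs_le.mp h1]
  have hsq2 : b1 ^ 2 ≤ M ^ 2 := by nlinarith [abs_le.mp h2]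
  have hcoef2 : |2 - a1 ^ 2 - b1 ^ 2| ≤ 2 + 2 * M ^ 2 := by
    rw [abs_le]; constructor <;> nlinarith [sq_nonneg a1, sq_nonneg b1]
  have heq : (1/4) * (1 - a1 ^ 2) * (b1 + a2 + b2) + (1/4) * (1 - b1 ^ 2) * (a1 + a2 + b2)
      = (1/4) * ((1 - a1 * b1) * (a1 + b1) + (2 - a1 ^ 2 - b1 ^ 2) * (a2 + b2)) := by ring
  rw [heq, abs_mul]
  have hstep : |(1 - a1 * b1) * (a1 + b1) + (2 - a1 ^ 2 - b1 ^ 2) * (a2 + b2)|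
      ≤ (1 + M ^ 2) * N + (2 + 2 * M ^ 2) * N := by
    refine (abs_add_le _ _).trans ?_
    rw [abs_mul, abs_mul]
    gcongr
  have h14 : |(1:ℝ)/4| = 1/4 := by norm_num
  rw [h14]
  nlinarith [hstep, hN0, sq_nonneg M]

private lemma dv_bound (a1 b1 a2 b2 M N : ℝ) (h3 : |a2| ≤ M) (h4 : |b2| ≤ M)
    (hM0 : 0 ≤ M) (hN1 : |a1 + b1| ≤ N) (hN2 : |a2 + b2| ≤ N) (hN0 : 0 ≤ N) :
    |-((1/4) * (1 - a2 ^ 2) * (a1 + b1 - b2)) + -((1/4) * (1 - b2 ^ 2) * (a1 + b1 - a2))|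
      ≤ (1 + M ^ 2) * N := by
  have he1e2 : |a2 * b2| ≤ M * M := by
    rw [abs_mul]; exact mul_le_mul h3 h4 (abs_nonneg _) hM0
  have hcoef3 : |1 - a2 * b2| ≤ 1 + M ^ 2 := by
    rw [abs_le]; constructor <;> nlinarith [abs_le.mp he1e2]
  have hsq3 : a2 ^ 2 ≤ M ^ 2 := by nlinarith [abs_le.mp h3]
  have hsq4 : b2 ^ 2 ≤ M ^ 2 := by nlinarith [abs_le.mp h4]
  have hcoef4 : |2 - a2 ^ 2 - b2 ^ 2| ≤ 2 + 2 * M ^ 2 := by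
    rw [abs_le]; constructor <;> nlinarith [sq_nonneg a2, sq_nonneg b2]
  have heq : -((1/4) * (1 - a2 ^ 2) * (a1 + b1 - b2)) + -((1/4) * (1 - b2 ^ 2) * (a1 + b1 - a2))
      = -(1/4) * ((2 - a2 ^ 2 - b2 ^ 2) * (a1 + b1) - (1 - a2 * b2) * (a2 + b2)) := by ring
  rw [heq, abs_mul]
  have hstep : |(2 - a2 ^ 2 - b2 ^ 2) * (a1 + b1) - (1 - a2 * b2) * (a2 + b2)|
      ≤ (2 + 2 * M ^ 2) * N + (1 + M ^ 2) * N := by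
    refine (abs_sub _ _).trans ?_
    rw [abs_mul, abs_mul]
    gcongr
  rw [show |(-(1/4):ℝ)| = 1/4 by norm_num]
  nlinarith [hstep, hN0, sq_nonneg M]

/-- For the Red Queen dynamics of the four-gene game, if the
initial condition lies in `(−1,1)⁴` and in the skew-symmetric subspace
`{δ₁ = −δ₂, ε₁ = −ε₂}`, then the solution stays in that subspace for all
`t ≥ 0` and all four coordinates converge to `0` as `t → ∞`. -/
theorem stmt15 (d1 d2 e1 e2 : ℝ → ℝ)
    (hd1 : ∀ t, 0 ≤ t →
      HasDerivAt d1 ((1/4) * (1 - d1 t ^ 2) * (d2 t + e1 t + e2 t)) t)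
    (hd2 : ∀ t, 0 ≤ t →
      HasDerivAt d2 ((1/4) * (1 - d2 t ^ 2) * (d1 t + e1 t + e2 t)) t)
    (he1 : ∀ t, 0 ≤ t →
      HasDerivAt e1 (-((1/4) * (1 - e1 t ^ 2) * (d1 t + d2 t - e2 t))) t)
    (he2 : ∀ t, 0 ≤ t →
      HasDerivAt e2 (-((1/4) * (1 - e2 t ^ 2) * (d1 t + d2 t - e1 t))) t)
    (hinit : d1 0 ∈ Set.Ioo (-1:ℝ) 1 ∧ d2 0 ∈ Set.Ioo (-1:ℝ) 1 ∧
      e1 0 ∈ Set.Ioo (-1:ℝ) 1 ∧ e2 0 ∈ Set.Ioo (-1:ℝ) 1)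
    (hskew : d1 0 = -d2 0 ∧ e1 0 = -e2 0) :
    (∀ t ≥ (0:ℝ), d1 t = -d2 t ∧ e1 t = -e2 t) ∧
    Tendsto d1 atTop (nhds 0) ∧ Tendsto d2 atTop (nhds 0) ∧
    Tendsto e1 atTop (nhds 0) ∧ Tendsto e2 atTop (nhds 0) := by
  obtain ⟨hd10, hd20, he10, he20⟩ := hinit
  have hc1 : ∀ t, 0 ≤ t → ContinuousAt d1 t := fun t ht => (hd1 t ht).continuousAt
  have hc2 : ∀ t, 0 ≤ t → ContinuousAt d2 t := fun t ht => (hd2 t ht).continuousAt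
  have hc3 : ∀ t, 0 ≤ t → ContinuousAt e1 t := fun t ht => (he1 t ht).continuousAt
  have hc4 : ∀ t, 0 ≤ t → ContinuousAt e2 t := fun t ht => (he2 t ht).continuousAt
  -- skew-symmetry is preserved: u = d1 + d2 and v = e1 + e2 vanish identically
  have hskew0 : ∀ t, 0 ≤ t → d1 t + d2 t = 0 ∧ e1 t + e2 t = 0 := by
    intro T hT
    -- bound on Icc 0 T
    obtain ⟨M, hM⟩ : ∃ M, ∀ t ∈ Set.Icc (0:ℝ) T,
        |d1 t| + |d2 t| + |e1 t| + |e2 t| ≤ M := by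
      obtain ⟨M, hM⟩ := isCompact_Icc.exists_bound_of_continuousOn
        (f := fun t => |d1 t| + |d2 t| + |e1 t| + |e2 t|)
        (fun t ht => ((((hc1 t ht.1).abs.add (hc2 t ht.1).abs).add
          (hc3 t ht.1).abs).add (hc4 t ht.1).abs).continuousWithinAt)
      exact ⟨M, fun t ht => (le_abs_self _).trans ((Real.norm_eq_abs _).symm.le.trans (hM t ht))⟩
    have hM0 : 0 ≤ M := by
      have := hM 0 ⟨le_refl 0, hT⟩
      have h1 := abs_nonneg (d1 0); have h2 := abs_nonneg (d2 0)
      have h3 := abs_nonneg (e1 0); have h4 := abs_nonneg (e2 0)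
      linarith
    have hf' : ∀ t ∈ Set.Ico (0:ℝ) T,
        HasDerivWithinAt (fun t => (d1 t + d2 t, e1 t + e2 t))
          (((1/4) * (1 - d1 t ^ 2) * (d2 t + e1 t + e2 t)
              + (1/4) * (1 - d2 t ^ 2) * (d1 t + e1 t + e2 t),
            -((1/4) * (1 - e1 t ^ 2) * (d1 t + d2 t - e2 t))
              + -((1/4) * (1 - e2 t ^ 2) * (d1 t + d2 t - e1 t))) : ℝ × ℝ)
          (Set.Ici t) t := by
      intro t ht
      exact (((hd1 t ht.1).add (hd2 t ht.1)).prodMk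
        ((he1 t ht.1).add (he2 t ht.1))).hasDerivWithinAt
    have hfc : ContinuousOn (fun t => (d1 t + d2 t, e1 t + e2 t)) (Set.Icc (0:ℝ) T) := by
      intro t ht
      exact (((hc1 t ht.1).add (hc2 t ht.1)).prodMk
        ((hc3 t ht.1).add (hc4 t ht.1))).continuousWithinAt
    have hf0 : ‖((d1 0 + d2 0, e1 0 + e2 0) : ℝ × ℝ)‖ ≤ 0 := by
      have hu0 : d1 0 + d2 0 = 0 := by rw [hskew.1]; ring
      have hv0 : e1 0 + e2 0 = 0 := by rw [hskew.2]; ring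
      rw [hu0, hv0]
      simp [Prod.norm_def]
    have bound : ∀ t ∈ Set.Ico (0:ℝ) T,
        ‖(((1/4) * (1 - d1 t ^ 2) * (d2 t + e1 t + e2 t)
              + (1/4) * (1 - d2 t ^ 2) * (d1 t + e1 t + e2 t),
            -((1/4) * (1 - e1 t ^ 2) * (d1 t + d2 t - e2 t))
              + -((1/4) * (1 - e2 t ^ 2) * (d1 t + d2 t - e1 t))) : ℝ × ℝ)‖
          ≤ (1 + M ^ 2) * ‖((d1 t + d2 t, e1 t + e2 t) : ℝ × ℝ)‖ + 0 := by
      intro t ht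
      have hMt := hM t (Set.Ico_subset_Icc_self ht)
      have ha1 := abs_nonneg (d1 t); have ha2 := abs_nonneg (d2 t)
      have ha3 := abs_nonneg (e1 t); have ha4 := abs_nonneg (e2 t)
      have h1 : |d1 t| ≤ M := by linarith
      have h2 : |d2 t| ≤ M := by linarith
      have h3 : |e1 t| ≤ M := by linarith
      have h4 : |e2 t| ≤ M := by linarith
      have hN1 : |d1 t + d2 t| ≤ ‖((d1 t + d2 t, e1 t + e2 t) : ℝ × ℝ)‖ := by
        rw [Prod.norm_def]
        exact le_trans (Real.norm_eq_abs _).symm.le (le_max_left _ _)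
      have hN2 : |e1 t + e2 t| ≤ ‖((d1 t + d2 t, e1 t + e2 t) : ℝ × ℝ)‖ := by
        rw [Prod.norm_def]
        exact le_trans (Real.norm_eq_abs _).symm.le (le_max_right _ _)
      have hN0 : (0:ℝ) ≤ ‖((d1 t + d2 t, e1 t + e2 t) : ℝ × ℝ)‖ := norm_nonneg _
      have hb1 := du_bound (d1 t) (d2 t) (e1 t) (e2 t) M _ h1 h2 hM0 hN1 hN2 hN0
      have hb2 := dv_bound (d1 t) (d2 t) (e1 t) (e2 t) M _ h3 h4 hM0 hN1 hN2 hN0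
      rw [add_zero, Prod.norm_def]
      apply max_le
      · rw [Real.norm_eq_abs]; exact hb1
      · rw [Real.norm_eq_abs]; exact hb2
    have hgron := norm_le_gronwallBound_of_norm_deriv_right_le hfc hf' hf0 bound T
      ⟨hT, le_refl T⟩
    rw [gronwallBound_ε0_δ0] at hgron
    have hzero : ((d1 T + d2 T, e1 T + e2 T) : ℝ × ℝ) = 0 := norm_le_zero_iff.mp hgron
    rw [Prod.ext_iff] at hzero
    exact ⟨hzero.1, hzero.2⟩
  have hskew' : ∀ t ≥ (0:ℝ), d1 t = -d2 t ∧ e1 t = -e2 t := by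
    intro t ht
    obtain ⟨h1, h2⟩ := hskew0 t ht
    exact ⟨by linarith, by linarith⟩
  -- reduced dynamics
  have hd1' : ∀ t, 0 ≤ t → HasDerivAt d1 (-(1/4) * (1 - d1 t ^ 2) * d1 t) t := by
    intro t ht
    obtain ⟨h1, h2⟩ := hskew0 t ht
    have hd2t : d2 t = -d1 t := by linarith
    have he2t : e2 t = -e1 t := by linarith
    have h := hd1 t ht
    rw [hd2t, he2t] at h
    convert h using 1
    ring
  have he1' : ∀ t, 0 ≤ t → HasDerivAt e1 (-(1/4) * (1 - e1 t ^ 2) * e1 t) t := by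
    intro t ht
    obtain ⟨h1, h2⟩ := hskew0 t ht
    have hd2t : d2 t = -d1 t := by linarith
    have he2t : e2 t = -e1 t := by linarith
    have h := he1 t ht
    rw [hd2t, he2t] at h
    convert h using 1
    ring
  have td1 := scalar_tendsto d1 hd1' hd10
  have te1 := scalar_tendsto e1 he1' he10
  have td2 : Tendsto d2 atTop (nhds 0) := by
    have heq : (fun t => -d1 t) =ᶠ[atTop] d2 := by
      filter_upwards [eventually_ge_atTop (0:ℝ)] with t ht
      have := (hskew0 t ht).1
      show -d1 t = d2 t
      linarith
    have h := td1.neg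
    rw [neg_zero] at h
    exact h.congr' heq
  have te2 : Tendsto e2 atTop (nhds 0) := by
    have heq : (fun t => -e1 t) =ᶠ[atTop] e2 := by
      filter_upwards [eventually_ge_atTop (0:ℝ)] with t ht
      have := (hskew0 t ht).2
      show -e1 t = e2 t
      linarith
    have h := te1.neg
    rw [neg_zero] at h
    exact h.congr' heq
  exact ⟨hskew', td1, td2, te1, te2⟩
end
end

section
/- Consider the planar ODE system on [−1,1]²: δ̇ = ¼(1−δ²)(δ+2ε), ε̇ = −¼(1−ε²)(2δ−ε). Along any solution, the function t ↦ δ(t)² + ε(t)² − δ(t)²ε(t)² is nondecreasing. In particular, if δ(0)² + ε(0)² − δ(0)²ε(0)² ≥ ρ for some ρ ∈ (0,1), then δ(t)² + ε(t)² − δ(t)²ε(t)² ≥ ρ, and hence δ(t)² + ε(t)² ≥ ρ, for all t ≥ 0. -/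
noncomputable section

/-- For the planar system `δ̇ = ¼(1−δ²)(δ+2ε)`,
`ε̇ = −¼(1−ε²)(2δ−ε)` on `[−1,1]²`, the function `δ² + ε² − δ²ε²` is
nondecreasing along solutions; in particular if it is `≥ ρ` at time `0` for
some `ρ ∈ (0,1)`, then `δ(t)² + ε(t)² − δ(t)²ε(t)² ≥ ρ` and hence
`δ(t)² + ε(t)² ≥ ρ` for all `t ≥ 0`. -/
theorem stmt16 (d e : ℝ → ℝ)
    (hval : ∀ t, 0 ≤ t → d t ∈ Set.Icc (-1:ℝ) 1 ∧ e t ∈ Set.Icc (-1:ℝ) 1)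
    (hd : ∀ t, 0 ≤ t → HasDerivAt d ((1/4) * (1 - d t ^ 2) * (d t + 2 * e t)) t)
    (he : ∀ t, 0 ≤ t → HasDerivAt e (-((1/4) * (1 - e t ^ 2) * (2 * d t - e t))) t) :
    MonotoneOn (fun t => d t ^ 2 + e t ^ 2 - d t ^ 2 * e t ^ 2) (Set.Ici (0:ℝ)) ∧
    ∀ ρ : ℝ, 0 < ρ → ρ < 1 →
      ρ ≤ d 0 ^ 2 + e 0 ^ 2 - d 0 ^ 2 * e 0 ^ 2 →
      ∀ t ≥ (0:ℝ), ρ ≤ d t ^ 2 + e t ^ 2 - d t ^ 2 * e t ^ 2 ∧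
        ρ ≤ d t ^ 2 + e t ^ 2 := by
  set V : ℝ → ℝ := fun t => d t ^ 2 + e t ^ 2 - d t ^ 2 * e t ^ 2 with hV
  set g : ℝ → ℝ := fun t =>
    (1/2) * (1 - d t ^ 2) * (1 - e t ^ 2) * (d t ^ 2 + e t ^ 2) with hg
  have hVd : ∀ t, 0 ≤ t → HasDerivAt V (g t) t := by
    intro t ht
    have h1 := ((hd t ht).pow 2)
    have h2 := ((he t ht).pow 2)
    have := (h1.add h2).sub (h1.mul h2)
    refine this.congr_deriv ?_
    simp only [hg, Pi.pow_apply]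
    ring
  have hmono : MonotoneOn V (Set.Ici (0:ℝ)) := by
    apply monotoneOn_of_hasDerivWithinAt_nonneg (f' := g) (convex_Ici 0)
    · intro t ht
      exact (hVd t ht).continuousAt.continuousWithinAt
    · intro t ht
      rw [interior_Ici] at ht
      exact (hVd t (le_of_lt ht)).hasDerivWithinAt
    · intro t ht
      rw [interior_Ici] at ht
      obtain ⟨⟨hd1, hd2⟩, ⟨he1, he2⟩⟩ := hval t (le_of_lt ht)
      have h1 : d t ^ 2 ≤ 1 := by nlinarith
      have h2 : e t ^ 2 ≤ 1 := by nlinarith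
      simp only [hg]
      have h3 : (0:ℝ) ≤ (1 - d t ^ 2) * (1 - e t ^ 2) * (d t ^ 2 + e t ^ 2) :=
        mul_nonneg (mul_nonneg (by linarith) (by linarith)) (by positivity)
      linarith
  refine ⟨hmono, fun ρ hρ0 hρ1 hρV t ht => ?_⟩
  have h1 : ρ ≤ V t := hρV.trans (hmono Set.self_mem_Ici ht ht)
  refine ⟨h1, h1.trans ?_⟩
  have : 0 ≤ d t ^ 2 * e t ^ 2 := by positivity
  simp only [hV]
  linarith
end
end

section
/- Consider the planar ODE system on [−1,1]²: δ̇ = ¼(1−δ²)(δ+2ε), ε̇ = −¼(1−ε²)(2δ−ε). For every solution defined for all t ≥ 0 with initial condition (δ(0),ε(0)) ∈ (−1,1)² \ {(0,0)}, the quantity (1−δ(t)²)(1−ε(t)²) tends to 0 as t → ∞; equivalently, max{|δ(t)|, |ε(t)|} → 1 as t → ∞. -/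
open Filter

noncomputable section

/-- For the planar system `δ̇ = ¼(1−δ²)(δ+2ε)`,
`ε̇ = −¼(1−ε²)(2δ−ε)` on `[−1,1]²`, every solution defined for all `t ≥ 0`
with initial condition in `(−1,1)² \ {(0,0)}` satisfies
`(1−δ(t)²)(1−ε(t)²) → 0`; equivalently `max{|δ(t)|,|ε(t)|} → 1` as `t → ∞`. -/
theorem stmt17 (d e : ℝ → ℝ)
    (hval : ∀ t, 0 ≤ t → d t ∈ Set.Icc (-1:ℝ) 1 ∧ e t ∈ Set.Icc (-1:ℝ) 1)
    (hd : ∀ t, 0 ≤ t → HasDerivAt d ((1/4) * (1 - d t ^ 2) * (d t + 2 * e t)) t)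
    (he : ∀ t, 0 ≤ t → HasDerivAt e (-((1/4) * (1 - e t ^ 2) * (2 * d t - e t))) t)
    (hinit : d 0 ∈ Set.Ioo (-1:ℝ) 1 ∧ e 0 ∈ Set.Ioo (-1:ℝ) 1)
    (hne : ¬ (d 0 = 0 ∧ e 0 = 0)) :
    Tendsto (fun t => (1 - d t ^ 2) * (1 - e t ^ 2)) atTop (nhds 0) ∧
    Tendsto (fun t => max |d t| |e t|) atTop (nhds 1) := by
  obtain ⟨hd0, he0⟩ := hinit
  set V : ℝ → ℝ := fun t => (1 - d t ^ 2) * (1 - e t ^ 2) with hVdef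
  -- bounds on squares
  have hsq : ∀ t, 0 ≤ t → d t ^ 2 ≤ 1 ∧ e t ^ 2 ≤ 1 := by
    intro t ht
    obtain ⟨⟨ha, hb⟩, ⟨hc, hd'⟩⟩ := hval t ht
    constructor <;> nlinarith
  have hVnonneg : ∀ t, 0 ≤ t → 0 ≤ V t := by
    intro t ht
    obtain ⟨h1, h2⟩ := hsq t ht
    have : (0:ℝ) ≤ 1 - d t ^ 2 := by linarith
    have : (0:ℝ) ≤ 1 - e t ^ 2 := by linarith
    simp only [hVdef]
    nlinarith
  -- derivative of V
  have hV' : ∀ t, 0 ≤ t → HasDerivAt V (-(1/2) * (d t ^ 2 + e t ^ 2) * V t) t := by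
    intro t ht
    have h1 := ((hd t ht).pow 2).const_sub 1
    have h2 := ((he t ht).pow 2).const_sub 1
    have h3 := h1.mul h2
    refine h3.congr_deriv ?_
    simp only [hVdef, V, Pi.pow_apply]
    ring
  have hVcont : ContinuousOn V (Set.Ici 0) := fun t ht =>
    ((hV' t ht).continuousAt).continuousWithinAt
  -- V is nonincreasing on [0, ∞)
  have hVanti : AntitoneOn V (Set.Ici 0) := by
    apply antitoneOn_of_deriv_nonpos (convex_Ici 0) hVcont
    · intro x hx
      rw [interior_Ici] at hx
      exact ((hV' x hx.le).differentiableAt).differentiableWithinAt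
    · intro x hx
      rw [interior_Ici] at hx
      rw [(hV' x hx.le).deriv]
      have h1 := hVnonneg x hx.le
      nlinarith [sq_nonneg (d x), sq_nonneg (e x)]
  -- V 0 < 1
  have hV0lt : V 0 < 1 := by
    have he2 : e 0 ^ 2 < 1 := by nlinarith [he0.1, he0.2]
    have hd2 : d 0 ^ 2 < 1 := by nlinarith [hd0.1, hd0.2]
    rcases not_and_or.mp hne with h | h
    · have h1 : 0 < d 0 ^ 2 := by positivity
      simp only [hVdef]
      nlinarith [sq_nonneg (e 0)]
    · have h1 : 0 < e 0 ^ 2 := by positivity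
      simp only [hVdef]
      nlinarith [sq_nonneg (d 0)]
  set c : ℝ := 1 - V 0 with hcdef
  have hc : 0 < c := by simp [hcdef]; linarith
  -- radial lower bound
  have hr : ∀ t, 0 ≤ t → c ≤ d t ^ 2 + e t ^ 2 := by
    intro t ht
    have hVt : V t ≤ V 0 := hVanti (Set.self_mem_Ici) ht ht
    have : 1 - d t ^ 2 - e t ^ 2 ≤ V t := by
      simp only [hVdef]
      nlinarith [sq_nonneg (d t * e t)]
    simp only [hcdef]
    linarith
  -- exponential decay: g t = V t * exp (c/2 * t) is nonincreasing
  set g : ℝ → ℝ := fun t => V t * Real.exp (c / 2 * t) with hgdef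
  have hg' : ∀ t, 0 ≤ t → HasDerivAt g
      (-(1/2) * (d t ^ 2 + e t ^ 2) * V t * Real.exp (c / 2 * t)
        + V t * (Real.exp (c / 2 * t) * (c / 2))) t := by
    intro t ht
    have hexp : HasDerivAt (fun t : ℝ => Real.exp (c / 2 * t))
        (Real.exp (c / 2 * t) * (c / 2)) t := by
      have := ((hasDerivAt_id t).const_mul (c / 2)).exp
      simpa using this
    exact (hV' t ht).mul hexp
  have hgcont : ContinuousOn g (Set.Ici 0) := fun t ht =>
    ((hg' t ht).continuousAt).continuousWithinAt
  have hganti : AntitoneOn g (Set.Ici 0) := by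
    apply antitoneOn_of_deriv_nonpos (convex_Ici 0) hgcont
    · intro x hx
      rw [interior_Ici] at hx
      exact ((hg' x hx.le).differentiableAt).differentiableWithinAt
    · intro x hx
      rw [interior_Ici] at hx
      rw [(hg' x hx.le).deriv]
      have h1 := hVnonneg x hx.le
      have h2 := hr x hx.le
      have h3 := Real.exp_pos (c / 2 * x)
      nlinarith [mul_nonneg (mul_nonneg (sub_nonneg.mpr h2) h1) h3.le]
  -- V t ≤ V 0 * exp (-(c/2 * t))
  have hVle : ∀ t, 0 ≤ t → V t ≤ V 0 * Real.exp (-(c / 2 * t)) := by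
    intro t ht
    have h1 : g t ≤ g 0 := hganti (Set.self_mem_Ici) ht ht
    have h2 : V t * Real.exp (c / 2 * t) ≤ V 0 := by
      simpa [hgdef] using h1
    calc V t = V t * Real.exp (c / 2 * t) * Real.exp (-(c / 2 * t)) := by
          rw [mul_assoc, ← Real.exp_add]; simp
      _ ≤ V 0 * Real.exp (-(c / 2 * t)) :=
          mul_le_mul_of_nonneg_right h2 (Real.exp_pos _).le
  -- V → 0
  have hVtend : Tendsto V atTop (nhds 0) := by
    have hlin : Tendsto (fun t : ℝ => -(c / 2 * t)) atTop atBot :=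
      tendsto_neg_atBot_iff.mpr (Tendsto.const_mul_atTop (by positivity) tendsto_id)
    have hupper : Tendsto (fun t : ℝ => V 0 * Real.exp (-(c / 2 * t))) atTop (nhds 0) := by
      have := (Real.tendsto_exp_atBot.comp hlin).const_mul (V 0)
      simpa using this
    apply tendsto_of_tendsto_of_tendsto_of_le_of_le' tendsto_const_nhds hupper
    · exact (eventually_ge_atTop 0).mono hVnonneg
    · exact (eventually_ge_atTop 0).mono hVle
  refine ⟨hVtend, ?_⟩
  -- second part: max |d| |e| → 1
  have hsqrt : Tendsto (fun t => Real.sqrt (V t)) atTop (nhds 0) := by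
    simpa using hVtend.sqrt
  have hlower : Tendsto (fun t => 1 - Real.sqrt (V t)) atTop (nhds 1) := by
    simpa using (tendsto_const_nhds (x := (1:ℝ))).sub hsqrt
  apply tendsto_of_tendsto_of_tendsto_of_le_of_le' hlower tendsto_const_nhds
  · filter_upwards [eventually_ge_atTop (0:ℝ)] with t ht
    set m := max |d t| |e t| with hm
    have hm0 : 0 ≤ m := le_trans (abs_nonneg _) (le_max_left _ _)
    obtain ⟨⟨ha, hb⟩, ⟨hc', hd'⟩⟩ := hval t ht
    have hda : |d t| ≤ 1 := abs_le.mpr ⟨ha, hb⟩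
    have hea : |e t| ≤ 1 := abs_le.mpr ⟨hc', hd'⟩
    have hm1 : m ≤ 1 := max_le hda hea
    have hd2 : d t ^ 2 ≤ m ^ 2 := by
      have : |d t| ≤ m := le_max_left _ _
      nlinarith [abs_nonneg (d t), sq_abs (d t)]
    have he2 : e t ^ 2 ≤ m ^ 2 := by
      have : |e t| ≤ m := le_max_right _ _
      nlinarith [abs_nonneg (e t), sq_abs (e t)]
    have hkey : (1 - m) ^ 2 ≤ V t := by
      have ha1 : (0:ℝ) ≤ 1 - m ^ 2 := by nlinarith
      have ha2 : 1 - m ^ 2 ≤ 1 - d t ^ 2 := by linarith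
      have ha3 : 1 - m ^ 2 ≤ 1 - e t ^ 2 := by linarith
      have ha4 : (1 - m ^ 2) * (1 - m ^ 2) ≤ (1 - d t ^ 2) * (1 - e t ^ 2) :=
        mul_le_mul ha2 ha3 ha1 (by linarith)
      have ha5 : (0:ℝ) ≤ (1 - m) ^ 2 * (2 * m + m ^ 2) :=
        mul_nonneg (sq_nonneg _) (by nlinarith)
      simp only [hVdef]
      nlinarith
    have h1m : 1 - m ≤ Real.sqrt (V t) := by
      have := Real.sqrt_le_sqrt hkey
      rwa [Real.sqrt_sq (by linarith : (0:ℝ) ≤ 1 - m)] at this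
    linarith
  · filter_upwards [eventually_ge_atTop (0:ℝ)] with t ht
    obtain ⟨⟨ha, hb⟩, ⟨hc', hd'⟩⟩ := hval t ht
    exact max_le (abs_le.mpr ⟨ha, hb⟩) (abs_le.mpr ⟨hc', hd'⟩)
end
end

section
/- Consider the ODE system δ̇ᵢ = ¼(1−δᵢ²)(δ_{3−i}+ε₁+ε₂), ε̇ᵢ = −¼(1−εᵢ²)(δ₁+δ₂−ε_{3−i}), i=1,2. Along any solution, the differences satisfy d/dt (δ₁(t) − δ₂(t)) = −¼(1 + δ₁δ₂ + (δ₁+δ₂)(ε₁+ε₂))·(δ₁(t) − δ₂(t)) and d/dt (ε₁(t) − ε₂(t)) = −¼(1 + ε₁ε₂ − (δ₁+δ₂)(ε₁+ε₂))·(ε₁(t) − ε₂(t)). In particular, for a solution with values in [−1,1]^4, each of the quantities δ₁(t) − δ₂(t) and ε₁(t) − ε₂(t) retains its sign (positive, zero, or negative) for all t ≥ 0. -/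
noncomputable section

lemma sign_mul_exp (x y : ℝ) : Real.sign (x * Real.exp y) = Real.sign x := by
  rcases lt_trichotomy x 0 with h | h | h
  · rw [Real.sign_of_neg h, Real.sign_of_neg (mul_neg_of_neg_of_pos h (Real.exp_pos y))]
  · simp [h]
  · rw [Real.sign_of_pos h, Real.sign_of_pos (mul_pos h (Real.exp_pos y))]

lemma linear_ode_sol (u c : ℝ → ℝ) (hc : Continuous c)
    (hu : ∀ t, HasDerivAt u (c t * u t) t) (t : ℝ) :
    u t = u 0 * Real.exp (∫ s in (0:ℝ)..t, c s) := by
  set F : ℝ → ℝ := fun t => ∫ s in (0:ℝ)..t, c s with hF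
  have hF' : ∀ t, HasDerivAt F (c t) t := by
    intro t
    exact intervalIntegral.integral_hasDerivAt_right (hc.intervalIntegrable _ _)
      (hc.stronglyMeasurableAtFilter _ _) hc.continuousAt
  set g : ℝ → ℝ := fun t => u t * Real.exp (-(F t)) with hg
  have hg' : ∀ t, HasDerivAt g 0 t := by
    intro t
    have := (hu t).fun_mul ((hF' t).fun_neg.exp)
    refine this.congr_deriv ?_
    ring
  have hgc : ∀ t, g t = g 0 := by
    intro t
    exact is_const_of_deriv_eq_zero (fun s => (hg' s).differentiableAt)
      (fun s => (hg' s).deriv) t 0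
  have h0 : F 0 = 0 := by simp [hF]
  have := hgc t
  simp only [hg, h0, neg_zero, Real.exp_zero, mul_one] at this
  have h2 : u t = u 0 * Real.exp (F t) := by
    have := congrArg (· * Real.exp (F t)) this
    simpa [mul_assoc, ← Real.exp_add] using this
  exact h2

/-- Along any solution of the Red Queen dynamics of the
four-gene game, the differences satisfy
`(δ₁−δ₂)˙ = −¼(1+δ₁δ₂+(δ₁+δ₂)(ε₁+ε₂))(δ₁−δ₂)` and
`(ε₁−ε₂)˙ = −¼(1+ε₁ε₂−(δ₁+δ₂)(ε₁+ε₂))(ε₁−ε₂)`; in particular, for a solution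
with values in `[−1,1]⁴` each difference retains its sign for all `t ≥ 0`. -/
theorem stmt18 (d1 d2 e1 e2 : ℝ → ℝ)
    (hd1 : ∀ t, HasDerivAt d1 ((1/4) * (1 - d1 t ^ 2) * (d2 t + e1 t + e2 t)) t)
    (hd2 : ∀ t, HasDerivAt d2 ((1/4) * (1 - d2 t ^ 2) * (d1 t + e1 t + e2 t)) t)
    (he1 : ∀ t, HasDerivAt e1 (-((1/4) * (1 - e1 t ^ 2) * (d1 t + d2 t - e2 t))) t)
    (he2 : ∀ t, HasDerivAt e2 (-((1/4) * (1 - e2 t ^ 2) * (d1 t + d2 t - e1 t))) t) :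
    (∀ t, HasDerivAt (fun s => d1 s - d2 s)
      (-(1/4) * (1 + d1 t * d2 t + (d1 t + d2 t) * (e1 t + e2 t)) *
        (d1 t - d2 t)) t) ∧
    (∀ t, HasDerivAt (fun s => e1 s - e2 s)
      (-(1/4) * (1 + e1 t * e2 t - (d1 t + d2 t) * (e1 t + e2 t)) *
        (e1 t - e2 t)) t) ∧
    ((∀ t, d1 t ∈ Set.Icc (-1:ℝ) 1 ∧ d2 t ∈ Set.Icc (-1:ℝ) 1 ∧
        e1 t ∈ Set.Icc (-1:ℝ) 1 ∧ e2 t ∈ Set.Icc (-1:ℝ) 1) →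
      ∀ t ≥ (0:ℝ), Real.sign (d1 t - d2 t) = Real.sign (d1 0 - d2 0) ∧
        Real.sign (e1 t - e2 t) = Real.sign (e1 0 - e2 0)) := by
  have Dd1 : Differentiable ℝ d1 := fun t => (hd1 t).differentiableAt
  have Dd2 : Differentiable ℝ d2 := fun t => (hd2 t).differentiableAt
  have De1 : Differentiable ℝ e1 := fun t => (he1 t).differentiableAt
  have De2 : Differentiable ℝ e2 := fun t => (he2 t).differentiableAt
  set cd : ℝ → ℝ := fun t =>
    -(1/4) * (1 + d1 t * d2 t + (d1 t + d2 t) * (e1 t + e2 t)) with hcd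
  set ce : ℝ → ℝ := fun t =>
    -(1/4) * (1 + e1 t * e2 t - (d1 t + d2 t) * (e1 t + e2 t)) with hce
  have hcdc : Continuous cd := by
    apply Continuous.mul continuous_const
    have := Dd1.continuous; have := Dd2.continuous; have := De1.continuous; have := De2.continuous
    fun_prop
  have hcec : Continuous ce := by
    apply Continuous.mul continuous_const
    have := Dd1.continuous; have := Dd2.continuous; have := De1.continuous; have := De2.continuous
    fun_prop
  have hD : ∀ t, HasDerivAt (fun s => d1 s - d2 s) (cd t * (d1 t - d2 t)) t := by
    intro t
    have := (hd1 t).fun_sub (hd2 t)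
    refine this.congr_deriv ?_
    simp only [hcd]
    ring
  have hE : ∀ t, HasDerivAt (fun s => e1 s - e2 s) (ce t * (e1 t - e2 t)) t := by
    intro t
    have := (he1 t).fun_sub (he2 t)
    refine this.congr_deriv ?_
    simp only [hce]
    ring
  refine ⟨fun t => by simpa [hcd, mul_assoc] using hD t,
    fun t => by simpa [hce, mul_assoc] using hE t, ?_⟩
  intro _ t _
  constructor
  · rw [linear_ode_sol (fun s => d1 s - d2 s) cd hcdc hD t, sign_mul_exp]
  · rw [linear_ode_sol (fun s => e1 s - e2 s) ce hcec hE t, sign_mul_exp]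
end
end

section
/- Let u : {0,1}² × {0,1}² → ℝ be the payoff function given (with rows and columns indexed by 00,01,10,11) by the matrix [[1,½,½,−1],[−½,0,0,−½],[−½,0,0,−½],[−1,½,½,1]]. Then the associated two-team game has no weak pure Nash equilibrium: for every corner (x,y) ∈ {0,1}² × {0,1}², either there exists i ∈ {1,2} with u(x,y) < u(x̄ⁱ,y), or there exists j ∈ {1,2} with u(x,y) > u(x,ȳʲ). -/
/-!
Call `x ∈ {0,1}²` constant when its bits agree. A single flip toggles constancy, and a mixed
profile can be made constant with either value by one flip. Against a constant `y`, team A ranks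
constant-matching `x` (`1`) above mixed (`−½`) above constant-opposite (`−1`); against a mixed `y`
it ranks constant (`½`) above mixed (`0`). Facing a constant `x`, team B ranks constant-opposite
`y` (`−1`) above mixed (`½`) above constant-matching (`1`). Every corner therefore admits a
one-bit strict improvement for some player.
-/

noncomputable section

/-- The payoff function of the four-gene game, given (with rows and columns
indexed by `00,01,10,11`) by the matrix
`[[1,½,½,−1],[−½,0,0,−½],[−½,0,0,−½],[−1,½,½,1]]`. -/
def gameU (x y : Fin 2 → Bool) : ℝ :=
  if x 0 = x 1 then
    (if y 0 = y 1 then (if x 0 = y 0 then 1 else -1) else 1/2)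
  else
    (if y 0 = y 1 then -(1/2) else 0)

theorem bflip_apply_zero_ne_apply_one {x : Fin 2 → Bool} (hx : x 0 = x 1) (i : Fin 2) :
    bflip x i 0 ≠ bflip x i 1 := by
  fin_cases i <;> simp [bflip, hx]

theorem exists_bflip_eq_of_ne {x : Fin 2 → Bool} (hx : x 0 ≠ x 1) (b : Bool) :
    ∃ i, bflip x i 0 = b ∧ bflip x i 1 = b := by
  by_cases h : x 0 = b
  · exact ⟨1, by simpa [bflip] using h, by simpa [bflip] using (Bool.eq_not_iff.mpr hx).symm.trans h⟩
  · refine ⟨0, by simp [bflip, Bool.eq_not_iff, h], ?_⟩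
    simpa [bflip] using (Bool.eq_not_iff.mpr hx.symm).trans (Bool.eq_not_iff.mpr (Ne.symm h)).symm

section

variable {x y : Fin 2 → Bool}

theorem gameU_of_eq_of_eq (hx : x 0 = x 1) (hy : y 0 = y 1) :
    gameU x y = if x 0 = y 0 then 1 else -1 := by
  rw [gameU, if_pos hx, if_pos hy]

theorem gameU_of_eq_of_ne (hx : x 0 = x 1) (hy : y 0 ≠ y 1) : gameU x y = 1 / 2 := by
  rw [gameU, if_pos hx, if_neg hy]

theorem gameU_of_ne_of_eq (hx : x 0 ≠ x 1) (hy : y 0 = y 1) : gameU x y = -(1 / 2) := by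
  rw [gameU, if_neg hx, if_pos hy]

theorem gameU_of_ne_of_ne (hx : x 0 ≠ x 1) (hy : y 0 ≠ y 1) : gameU x y = 0 := by
  rw [gameU, if_neg hx, if_neg hy]

end

/-- The four-gene game has no weak pure Nash equilibrium:
at every corner `(x,y)`, either some player of team A strictly gains by
flipping her bit, or some player of team B strictly gains by flipping hers. -/
theorem stmt19 :
    ∀ (x y : Fin 2 → Bool),
      (∃ i : Fin 2, gameU x y < gameU (bflip x i) y) ∨
      (∃ j : Fin 2, gameU x (bflip y j) < gameU x y) := by
  intro x y
  by_cases hx : x 0 = x 1 <;> by_cases hy : y 0 = y 1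
  · by_cases hxy : x 0 = y 0
    · refine .inr ⟨0, ?_⟩
      rw [gameU_of_eq_of_ne hx (bflip_apply_zero_ne_apply_one hy 0), gameU_of_eq_of_eq hx hy,
        if_pos hxy]
      norm_num
    · refine .inl ⟨0, ?_⟩
      rw [gameU_of_ne_of_eq (bflip_apply_zero_ne_apply_one hx 0) hy, gameU_of_eq_of_eq hx hy,
        if_neg hxy]
      norm_num
  · obtain ⟨j, h0, h1⟩ := exists_bflip_eq_of_ne hy (!x 0)
    refine .inr ⟨j, ?_⟩
    rw [gameU_of_eq_of_eq hx (h0.trans h1.symm), if_neg (h0 ▸ Bool.self_ne_not _),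
      gameU_of_eq_of_ne hx hy]
    norm_num
  · obtain ⟨i, h0, h1⟩ := exists_bflip_eq_of_ne hx (y 0)
    refine .inl ⟨i, ?_⟩
    rw [gameU_of_eq_of_eq (h0.trans h1.symm) hy, if_pos h0, gameU_of_ne_of_eq hx hy]
    norm_num
  · obtain ⟨i, h0, h1⟩ := exists_bflip_eq_of_ne hx true
    refine .inl ⟨i, ?_⟩
    rw [gameU_of_eq_of_ne (h0.trans h1.symm) hy, gameU_of_ne_of_ne hx hy]
    norm_num
end
end
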